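/- arXiv:0901.3189 — 6 statements merged into one kernel-verified Lean document; each statement's English description precedes it below -/
import Mathlib

section
/- Let p be a prime and let a, b, c be natural numbers not divisible by p. Then the matrix M is numerically p-self-similar modulo p; that is, for all s, t with 0 ≤ s, t < p, all k ≥ 0, and all i, j < p^k, we have M[s·p^k + i, t·p^k + j] ≡ M[s,t] · M[i,j] (mod p). -/
/-- The matrix `M` from Definition 4.1: `M[0,0] = 1`, `M[0,j] = a^j` for `j > 0`,
`M[i,0] = c^i` for `i > 0`, and `M[i,j] = a*M[i,j-1] + b*M[i-1,j-1] + c*M[i-1,j]`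
for `i, j > 0`. -/
def M (a b c : ℕ) : ℕ → ℕ → ℕ
  | 0, 0 => 1
  | 0, j + 1 => a ^ (j + 1)
  | i + 1, 0 => c ^ (i + 1)
  | i + 1, j + 1 =>
      a * M a b c (i + 1) j + b * M a b c i j + c * M a b c i (j + 1)
  termination_by i j => i + j

/-!
The `i`-th row of `M` has generating function `(c + bX)^i / (1 - aX)^(i+1)`. Over `ZMod p`, with
`q = p^k`, raising a polynomial to the `q`-th power is the substitution `X ↦ X^q`, so row `s q + i`
is the expansion of row `s` times the polynomial `(1 - aX)^(q-1-i) (c + bX)^i` of degree `< q`.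
The coefficient of `X^(t q + j)` in such a product splits as `M[s,t]` times the `j`-th coefficient
of that polynomial, and the case `s = t = 0` identifies the latter with `M[i,j]`.
-/

open PowerSeries
open scoped Polynomial

theorem M_zero_left (a b c j : ℕ) : M a b c 0 j = a ^ j := by
  cases j <;> simp [M]

theorem M_zero_right (a b c i : ℕ) : M a b c i 0 = c ^ i := by
  cases i <;> simp [M]

theorem M_succ_succ (a b c i j : ℕ) :
    M a b c (i + 1) (j + 1) = a * M a b c (i + 1) j + b * M a b c i j + c * M a b c i (j + 1) := by
  rw [M]

theorem PowerSeries.coe_expand {K : Type*} [CommRing K] {q : ℕ} (hq : q ≠ 0) (f : K[X]) :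
    ((Polynomial.expand K q f : K[X]) : K⟦X⟧) = expand q hq (f : K⟦X⟧) := by
  ext n
  rw [Polynomial.coeff_coe, Polynomial.coeff_expand (Nat.pos_of_ne_zero hq), coeff_expand]
  split_ifs <;> simp [Polynomial.coeff_coe]

theorem PowerSeries.coeff_expand_mul_coe_of_natDegree_lt {K : Type*} [CommRing K] {q : ℕ}
    (hq : q ≠ 0) (f : K⟦X⟧) {P : K[X]} (hP : P.natDegree < q) (t : ℕ) {j : ℕ} (hj : j < q) :
    coeff (t * q + j) (expand q hq f * (P : K⟦X⟧)) = coeff t f * P.coeff j := by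
  have hq₀ : 0 < q := Nat.pos_of_ne_zero hq
  have digits : ∀ w v, v < q →
      ((t * q + j) / q = w ∧ (t * q + j) % q = v ↔ v + q * w = t * q + j) :=
    fun w v hv => (Nat.div_mod_unique hq₀).trans (and_iff_left hv)
  rw [coeff_mul, Finset.sum_eq_single (t * q, j)]
  · rw [coeff_expand, if_pos (dvd_mul_left q t), Nat.mul_div_cancel _ hq₀, Polynomial.coeff_coe]
  · rintro ⟨u, v⟩ huv hne
    rw [Finset.HasAntidiagonal.mem_antidiagonal] at huv
    rw [coeff_expand]
    split_ifs with hdvd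
    · obtain ⟨w, rfl⟩ := hdvd
      rw [Polynomial.coeff_coe, Polynomial.coeff_eq_zero_of_natDegree_lt, mul_zero]
      by_contra! hv
      have hw := (digits w v (by omega)).mpr (by rw [← huv, add_comm])
      have ht := (digits t j hj).mpr (by ring)
      exact hne (by rw [Prod.mk.injEq, ← hw.1, ← hw.2, ht.1, ht.2, mul_comm]; simp)
    · rw [zero_mul]
  · simp

theorem ZMod.expand_card_pow {p : ℕ} [Fact p.Prime] (k : ℕ) (f : (ZMod p)[X]) :
    Polynomial.expand (ZMod p) (p ^ k) f = f ^ p ^ k := by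
  induction k with
  | zero => simp
  | succ k ih => rw [pow_succ', Polynomial.expand_mul, ih, map_pow, ZMod.expand_card, ← pow_mul]

section RowSeries

variable (K : Type*) [CommRing K] (a b c : ℕ)

noncomputable def rowSeries (i : ℕ) : K⟦X⟧ := mk fun j => (M a b c i j : K)

noncomputable def rowDen : K[X] := 1 - Polynomial.C (a : K) * Polynomial.X

noncomputable def rowNum : K[X] := Polynomial.C (c : K) + Polynomial.C (b : K) * Polynomial.X

@[simp]
theorem coeff_rowSeries (i j : ℕ) : coeff j (rowSeries K a b c i) = M a b c i j :=
  coeff_mk _ _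

theorem coe_rowDen : (rowDen K a : K⟦X⟧) = 1 - C (a : K) * X := by
  simp only [rowDen, Polynomial.coe_sub, Polynomial.coe_one, Polynomial.coe_mul,
    Polynomial.coe_C, Polynomial.coe_X]

theorem coe_rowNum : (rowNum K b c : K⟦X⟧) = C (c : K) + C (b : K) * X := by
  simp only [rowNum, Polynomial.coe_add, Polynomial.coe_mul, Polynomial.coe_C, Polynomial.coe_X]

theorem rowDen_mul_rowSeries_zero : (rowDen K a : K⟦X⟧) * rowSeries K a b c 0 = 1 := by
  ext (_ | n) <;>
    simp only [coe_rowDen, sub_mul, one_mul, mul_assoc, map_sub, coeff_C_mul, coeff_zero_X_mul,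
      coeff_succ_X_mul, coeff_rowSeries, coeff_one, M_zero_left] <;>
    simp [pow_succ']

theorem rowDen_mul_rowSeries_succ (i : ℕ) :
    (rowDen K a : K⟦X⟧) * rowSeries K a b c (i + 1) = rowNum K b c * rowSeries K a b c i := by
  ext (_ | n) <;>
    simp only [coe_rowDen, coe_rowNum, sub_mul, add_mul, one_mul, mul_assoc, map_sub, map_add,
      coeff_C_mul, coeff_zero_X_mul, coeff_succ_X_mul, coeff_rowSeries, M_zero_right,
      M_succ_succ] <;>
    push_cast <;> ring

theorem rowDen_pow_mul_rowSeries (i : ℕ) :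
    (rowDen K a : K⟦X⟧) ^ (i + 1) * rowSeries K a b c i = (rowNum K b c : K⟦X⟧) ^ i := by
  induction i with
  | zero => simpa using rowDen_mul_rowSeries_zero K a b c
  | succ i ih =>
    rw [pow_succ, mul_assoc, rowDen_mul_rowSeries_succ, mul_left_comm, ih, pow_succ']

theorem isUnit_coe_rowDen : IsUnit (rowDen K a : K⟦X⟧) := by
  simp [isUnit_iff_constantCoeff, coe_rowDen]

theorem natDegree_rowDen_pow_mul_rowNum_pow_lt {q r : ℕ} (hr : r < q) :
    (rowDen K a ^ (q - 1 - r) * rowNum K b c ^ r).natDegree < q := by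
  have hden : (rowDen K a).natDegree ≤ 1 := by unfold rowDen; compute_degree
  have hnum : (rowNum K b c).natDegree ≤ 1 := by unfold rowNum; compute_degree
  have := Polynomial.natDegree_mul_le.trans (add_le_add
    (Polynomial.natDegree_pow_le_of_le (q - 1 - r) hden) (Polynomial.natDegree_pow_le_of_le r hnum))
  omega

variable {K}

theorem rowSeries_mul_add {q : ℕ} (hq : q ≠ 0)
    (hfrob : ∀ f : K[X], Polynomial.expand K q f = f ^ q) (s : ℕ) {r : ℕ} (hr : r < q) :
    rowSeries K a b c (s * q + r) =
      expand q hq (rowSeries K a b c s) * ↑(rowDen K a ^ (q - 1 - r) * rowNum K b c ^ r) := by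
  have hexp (f : K[X]) : expand q hq (f : K⟦X⟧) = (f : K⟦X⟧) ^ q := by
    rw [← coe_expand, hfrob, Polynomial.coe_pow]
  have hexponent : (s + 1) * q = s * q + r + 1 + (q - 1 - r) := by
    rw [add_mul, one_mul]; omega
  apply ((isUnit_coe_rowDen K a).pow (s * q + r + 1)).mul_left_cancel
  rw [rowDen_pow_mul_rowSeries, Polynomial.coe_mul, Polynomial.coe_pow, Polynomial.coe_pow]
  calc (rowNum K b c : K⟦X⟧) ^ (s * q + r)
      = expand q hq ((rowNum K b c : K⟦X⟧) ^ s) * (rowNum K b c : K⟦X⟧) ^ r := by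
        rw [map_pow, hexp, ← pow_mul, pow_add, mul_comm q s]
    _ = expand q hq ((rowDen K a : K⟦X⟧) ^ (s + 1) * rowSeries K a b c s) *
          (rowNum K b c : K⟦X⟧) ^ r := by
        rw [rowDen_pow_mul_rowSeries]
    _ = (rowDen K a : K⟦X⟧) ^ (s * q + r + 1) * (expand q hq (rowSeries K a b c s) *
          ((rowDen K a : K⟦X⟧) ^ (q - 1 - r) * (rowNum K b c : K⟦X⟧) ^ r)) := by
        rw [map_mul, map_pow, hexp, ← pow_mul, mul_comm q, hexponent]
        ring

theorem cast_M_mul_add_mul_add {q : ℕ} (hq : q ≠ 0)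
    (hfrob : ∀ f : K[X], Polynomial.expand K q f = f ^ q) (s t : ℕ) {i j : ℕ}
    (hi : i < q) (hj : j < q) :
    (M a b c (s * q + i) (t * q + j) : K) = M a b c s t * M a b c i j := by
  have hcoeff (s t : ℕ) : (M a b c (s * q + i) (t * q + j) : K) =
      M a b c s t * (rowDen K a ^ (q - 1 - i) * rowNum K b c ^ i).coeff j := by
    rw [← coeff_rowSeries, rowSeries_mul_add a b c hq hfrob s hi,
      coeff_expand_mul_coe_of_natDegree_lt hq _
        (natDegree_rowDen_pow_mul_rowNum_pow_lt K a b c hi) t hj, coeff_rowSeries]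
  have hcoeff₀ := hcoeff 0 0
  simp only [zero_mul, zero_add, M_zero_left, pow_zero, Nat.cast_one, one_mul] at hcoeff₀
  rw [hcoeff, hcoeff₀]

end RowSeries

theorem M_numerically_self_similar_general (p a b c : ℕ) (hp : p.Prime) :
    ∀ s t k i j : ℕ, s < p → t < p → i < p ^ k → j < p ^ k →
      M a b c (s * p ^ k + i) (t * p ^ k + j) ≡ M a b c s t * M a b c i j [MOD p] := by
  intro s t k i j _ _ hi hj
  have : Fact p.Prime := ⟨hp⟩
  rw [← ZMod.natCast_eq_natCast_iff, Nat.cast_mul]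
  exact cast_M_mul_add_mul_add a b c (pow_ne_zero k hp.ne_zero) (ZMod.expand_card_pow k) s t hi hj

/-- Theorem 4.2: If `p` is prime and `a, b, c` are not divisible by `p`, then
`M` is numerically `p`-self-similar modulo `p`. -/
theorem M_numerically_self_similar (p a b c : ℕ) (hp : p.Prime)
    (ha : ¬ p ∣ a) (hb : ¬ p ∣ b) (hc : ¬ p ∣ c) :
    ∀ s t k i j : ℕ, s < p → t < p → i < p ^ k → j < p ^ k →
      M a b c (s * p ^ k + i) (t * p ^ k + j) ≡ M a b c s t * M a b c i j [MOD p] :=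
  M_numerically_self_similar_general p a b c hp
end

section
/- Pascal's triangle matrix P is numerically p-self-similar modulo p for any prime p; that is, for every prime p, all s, t with 0 ≤ s, t < p, all k ≥ 0, and all i, j < p^k, we have C((s·p^k + i) + (t·p^k + j), t·p^k + j) ≡ C(s + t, t) · C(i + j, j) (mod p). -/
/-!
Lucas's theorem in block form: modulo `p`, `C(n, k) ≡ C(n % p^k, k % p^k) · C(n / p^k, k / p^k)`,
because the base-`p` digits of `n % p^k` are the low `k` digits of `n`. The entry of `P` at
`(s p^k + i, t p^k + j)` is `C((s + t) p^k + (i + j), t p^k + j)`. Without a carry in `i + j` the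
block form gives `C(s + t, t) · C(i + j, j)` at once; with a carry `(i + j) % p^k < j`, so both
sides vanish modulo `p`.
-/

open Finset

theorem Nat.mod_pow_div_pow_mod (p : ℕ) {n m i : ℕ} (hi : i < m) :
    n % p ^ m / p ^ i % p = n / p ^ i % p := by
  rw [← Nat.pow_sub_mul_pow p hi.le, mul_comm, Nat.mod_mul_right_div_self,
    Nat.mod_mod_of_dvd _ (dvd_pow_self p (Nat.sub_ne_zero_of_lt hi))]

namespace Choose

variable {p : ℕ} [Fact p.Prime]

theorem choose_modEq_choose_mod_pow_mul_choose_div_pow_nat (n k m : ℕ) :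
    n.choose k ≡ (n % p ^ m).choose (k % p ^ m) * (n / p ^ m).choose (k / p ^ m) [MOD p] := by
  have hp : 0 < p ^ m := pow_pos (Fact.out : p.Prime).pos m
  calc n.choose k
      ≡ (n / p ^ m).choose (k / p ^ m) *
          ∏ i ∈ range m, (n / p ^ i % p).choose (k / p ^ i % p) [MOD p] := by
        rw [← Int.natCast_modEq_iff]
        exact_mod_cast choose_modEq_choose_mul_prod_range_choose m
    _ = (n / p ^ m).choose (k / p ^ m) *
          ∏ i ∈ range m, (n % p ^ m / p ^ i % p).choose (k % p ^ m / p ^ i % p) := by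
        congr 1
        refine prod_congr rfl fun i hi => ?_
        rw [Nat.mod_pow_div_pow_mod p (mem_range.1 hi), Nat.mod_pow_div_pow_mod p (mem_range.1 hi)]
    _ ≡ (n / p ^ m).choose (k / p ^ m) * (n % p ^ m).choose (k % p ^ m) [MOD p] :=
        (choose_modEq_prod_range_choose_nat (Nat.mod_lt n hp) (Nat.mod_lt k hp)).symm.mul_left _
    _ = _ := mul_comm _ _

end Choose

theorem Nat.add_div_eq_zero_of_le_add_mod {q i j : ℕ} (hi : i < q) (h : j ≤ (i + j) % q) :
    (i + j) / q = 0 := by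
  have := Nat.mod_add_div (i + j) q
  by_contra hc
  have : q ≤ q * ((i + j) / q) := Nat.le_mul_of_pos_right q (Nat.pos_of_ne_zero hc)
  omega

/-- Theorem 3.2: Pascal's triangle, rendered as the matrix `P[i,j] = C(i+j, j)`,
is numerically `p`-self-similar modulo `p` for any prime `p`. -/
theorem pascal_numerically_self_similar (p : ℕ) (hp : p.Prime) :
    ∀ s t k i j : ℕ, s < p → t < p → i < p ^ k → j < p ^ k →
      Nat.choose ((s * p ^ k + i) + (t * p ^ k + j)) (t * p ^ k + j) ≡
        Nat.choose (s + t) t * Nat.choose (i + j) j [MOD p] := by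
  have : Fact p.Prime := ⟨hp⟩
  intro s t k i j _ _ hi hj
  have hq : 0 < p ^ k := pow_pos hp.pos k
  have hcol := Choose.choose_modEq_choose_mod_pow_mul_choose_div_pow_nat (p := p) (i + j) j k
  have hblock := Choose.choose_modEq_choose_mod_pow_mul_choose_div_pow_nat (p := p)
    ((i + j) + (s + t) * p ^ k) (j + t * p ^ k) k
  simp only [Nat.add_mul_mod_self_right, Nat.add_mul_div_right _ _ hq, Nat.mod_eq_of_lt hj,
    Nat.div_eq_of_lt hj, zero_add, Nat.choose_zero_right, mul_one] at hcol hblock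
  rw [show (s * p ^ k + i) + (t * p ^ k + j) = (i + j) + (s + t) * p ^ k by ring,
    add_comm (t * p ^ k)]
  by_cases hcarry : j ≤ (i + j) % p ^ k
  · rw [Nat.add_div_eq_zero_of_le_add_mod hi hcarry, zero_add] at hblock
    exact hblock.trans (by rw [mul_comm]; exact hcol.symm.mul_left _)
  · rw [Nat.choose_eq_zero_of_lt (not_le.1 hcarry)] at hcol hblock
    rw [zero_mul] at hblock
    exact hblock.trans (by simpa using (hcol.mul_left (Nat.choose (s + t) t)).symm)
end

section
/- For all natural numbers i ≤ j, the matrix entry M[i,j] equals the sum, over k from 0 to i, of C(j,k) · C(j+i-k, i-k) · a^(j-k) · b^k · c^(i-k), where C denotes the binomial coefficient. (This is an exact equality of natural numbers, not merely a congruence.) -/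
open Finset

theorem M_eq_of_recursion {a b c : ℕ} (f : ℕ → ℕ → ℕ) (h_top : ∀ j, f 0 j = a ^ j)
    (h_left : ∀ i, f (i + 1) 0 = c ^ (i + 1))
    (h_succ : ∀ i j, f (i + 1) (j + 1) = a * f (i + 1) j + b * f i j + c * f i (j + 1)) :
    ∀ i j, M a b c i j = f i j := by
  intro i
  induction i with
  | zero => rintro (_ | j) <;> simp [M, h_top]
  | succ i ih =>
    intro j
    induction j with
    | zero => simp [M, h_left]
    | succ j ihj => rw [M, h_succ, ihj, ih, ih]

theorem Nat.choose_succ_mul_pow_sub (n m x : ℕ) :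
    n.choose (m + 1) * x ^ (n - m) = x * (n.choose (m + 1) * x ^ (n - (m + 1))) := by
  rcases lt_or_ge m n with h | h
  · rw [show n - m = n - (m + 1) + 1 by omega, pow_succ]
    ring
  · simp [Nat.choose_eq_zero_of_lt (Nat.lt_succ_of_le h)]

def delannoyTerm (a b c i j k : ℕ) : ℕ :=
  j.choose k * (j + i - k).choose j * a ^ (j - k) * b ^ k * c ^ (i - k)

def delannoySum (a b c i j : ℕ) : ℕ :=
  ∑ k ∈ range (i + 1), delannoyTerm a b c i j k

section

variable (a b c : ℕ)

theorem delannoyTerm_eq_zero_of_lt {i j k : ℕ} (h : i < k) : delannoyTerm a b c i j k = 0 := by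
  rcases lt_or_ge j k with hj | hj
  · simp [delannoyTerm, Nat.choose_eq_zero_of_lt hj]
  · simp [delannoyTerm, Nat.choose_eq_zero_of_lt (show j + i - k < j by omega)]

theorem delannoyTerm_succ_succ_zero (i j : ℕ) :
    delannoyTerm a b c (i + 1) (j + 1) 0 =
      a * delannoyTerm a b c (i + 1) j 0 + c * delannoyTerm a b c i (j + 1) 0 := by
  simp only [delannoyTerm, Nat.choose_zero_right, Nat.sub_zero, pow_zero]
  rw [show j + 1 + (i + 1) = (j + i + 1) + 1 by omega, Nat.choose_succ_succ,
    show j + (i + 1) = j + i + 1 by omega, show j + 1 + i = j + i + 1 by omega]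
  ring

theorem delannoyTerm_succ_succ_succ {i k : ℕ} (j : ℕ) (hk : k ≤ i) :
    delannoyTerm a b c (i + 1) (j + 1) (k + 1) =
      a * delannoyTerm a b c (i + 1) j (k + 1) + b * delannoyTerm a b c i j k +
        c * delannoyTerm a b c i (j + 1) (k + 1) := by
  unfold delannoyTerm
  set n := j + i - k
  rw [show j + 1 + (i + 1) - (k + 1) = n + 1 by omega, show j + (i + 1) - (k + 1) = n by omega,
    show j + 1 + i - (k + 1) = n by omega, Nat.add_sub_add_right, Nat.add_sub_add_right]
  have ha := Nat.choose_succ_mul_pow_sub j k a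
  have hc := Nat.choose_succ_mul_pow_sub n j c
  rw [show n - j = i - k by omega, show n - (j + 1) = i - (k + 1) by omega] at hc
  linear_combination
    ((j + 1).choose (k + 1) * a ^ (j - k) * b ^ (k + 1) * c ^ (i - k)) * Nat.choose_succ_succ n j +
    (n.choose j * a ^ (j - k) * b ^ (k + 1) * c ^ (i - k)) * Nat.choose_succ_succ j k +
    (n.choose j * b ^ (k + 1) * c ^ (i - k)) * ha +
    ((j + 1).choose (k + 1) * a ^ (j - k) * b ^ (k + 1)) * hc

theorem delannoySum_zero_left (j : ℕ) : delannoySum a b c 0 j = a ^ j := by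
  simp [delannoySum, delannoyTerm]

theorem delannoySum_zero_right (i : ℕ) : delannoySum a b c i 0 = c ^ i := by
  simp [delannoySum, delannoyTerm, sum_range_succ']

theorem delannoySum_succ_succ (i j : ℕ) :
    delannoySum a b c (i + 1) (j + 1) =
      a * delannoySum a b c (i + 1) j + b * delannoySum a b c i j +
        c * delannoySum a b c i (j + 1) := by
  have h_extend : delannoySum a b c i (j + 1) = ∑ k ∈ range (i + 2), delannoyTerm a b c i (j + 1) k := by
    rw [sum_range_succ, delannoyTerm_eq_zero_of_lt a b c (Nat.lt_succ_self i), add_zero,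
      delannoySum]
  rw [h_extend, delannoySum, delannoySum, delannoySum, mul_sum, mul_sum, mul_sum, sum_range_succ',
    sum_range_succ' (fun k => a * _), sum_range_succ' (fun k => c * _),
    delannoyTerm_succ_succ_zero,
    sum_congr rfl fun k hk => delannoyTerm_succ_succ_succ a b c j (mem_range_succ_iff.mp hk),
    sum_add_distrib, sum_add_distrib]
  ring

end

theorem M_eq_delannoySum (a b c i j : ℕ) : M a b c i j = delannoySum a b c i j :=
  M_eq_of_recursion _ (delannoySum_zero_left a b c) (fun i => delannoySum_zero_right a b c (i + 1))
    (delannoySum_succ_succ a b c) i j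

/-- Claim 4.6: for `i ≤ j`,
`M[i,j] = ∑_{k=0}^{i} C(j,k) · C(j+i-k, i-k) · a^(j-k) · b^k · c^(i-k)`,
an exact equality of natural numbers. -/
theorem M_eq_delannoy_sum (a b c : ℕ) :
    ∀ i j : ℕ, i ≤ j →
      M a b c i j = ∑ k ∈ Finset.range (i + 1),
        Nat.choose j k * Nat.choose (j + i - k) (i - k) * a ^ (j - k) * b ^ k * c ^ (i - k) := by
  intro i j _
  rw [M_eq_delannoySum, delannoySum]
  refine sum_congr rfl fun k hk => ?_
  have hki : k ≤ i := mem_range_succ_iff.mp hk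
  rw [delannoyTerm, ← Nat.choose_symm (by omega : i - k ≤ j + i - k),
    show j + i - k - (i - k) = j by omega]
end

section
/- Let p be a prime. For all i < p, M[i, p] ≡ a^p · c^i (mod p); consequently M[i, p] ≡ a · c^i (mod p). -/
/-- Term of the closed form for `M`. -/
def Mterm (a b c i j k : ℕ) : ℕ :=
  Nat.choose i k * Nat.choose (i + j - k) i * a ^ (j - k) * b ^ k * c ^ (i - k)

lemma key (a b c i j k : ℕ) :
    a * Mterm a b c (i+1) j k
    + (if k = 0 then 0 else b * Mterm a b c i j (k-1))
    + c * Mterm a b c i (j+1) k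
    = Mterm a b c (i+1) (j+1) k := by
  unfold Mterm
  rcases Nat.eq_zero_or_pos k with rfl | hk
  · rw [if_pos rfl]
    simp only [Nat.sub_zero, Nat.choose_zero_right, add_zero, pow_zero]
    have h1 : i + 1 + (j + 1) = (i + 1 + j) + 1 := by ring
    rw [h1, Nat.choose_succ_succ' (i+1+j) i]
    have h2 : i + 1 + j = i + (j + 1) := by ring
    rw [h2]
    ring
  obtain ⟨k, rfl⟩ : ∃ k', k = k' + 1 := ⟨k - 1, by omega⟩
  rw [if_neg (Nat.succ_ne_zero k)]
  simp only [Nat.add_sub_cancel]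
  rcases le_or_gt (k+1) j with hkj | hkj
  · -- k+1 ≤ j
    rcases le_or_gt (k+1) i with hki | hki
    · -- main case: all subtractions are genuine
      have e3 : i + 1 + j - (k+1) = i + (j+1) - (k+1) := by omega
      have e4 : i + j - k = i + (j+1) - (k+1) := by omega
      have e5 : i + 1 + (j + 1) - (k+1) = (i + (j+1) - (k+1)) + 1 := by omega
      rw [e5, Nat.choose_succ_succ' (i + (j+1) - (k+1)) i, Nat.choose_succ_succ' i k,
        e3, e4]
      have ha : a ^ (j + 1 - (k+1)) = a * a ^ (j - (k+1)) := by
        rw [← pow_succ']; congr 1; omega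
      have hc : c ^ (i + 1 - (k+1)) = c * c ^ (i - (k+1)) := by
        rw [← pow_succ']; congr 1; omega
      have hb : b ^ (k+1) = b * b ^ k := by rw [← pow_succ']
      have ha2 : a ^ (j - k) = a * a ^ (j - (k+1)) := by
        rw [← pow_succ']; congr 1; omega
      have hc2 : c ^ (i - k) = c * c ^ (i - (k+1)) := by
        rw [← pow_succ']; congr 1; omega
      rw [ha, hc, hb, ha2, hc2]
      ring
    · rcases eq_or_lt_of_le (Nat.succ_le_of_lt hki) with hki' | hki'
      · -- k+1 = i+1
        obtain rfl : i = k := by omega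
        have z1 : Nat.choose i (i+1) = 0 := Nat.choose_eq_zero_of_lt (by omega)
        have e3 : i + 1 + j - (i+1) = j := by omega
        have e4 : i + j - i = j := by omega
        have e5 : i + (j+1) - (i+1) = j := by omega
        have e6 : i + 1 + (j + 1) - (i+1) = j + 1 := by omega
        have e7 : i + 1 - (i+1) = 0 := by omega
        have e8 : i - i = 0 := by omega
        rw [z1, e3, e4, e5, e6, e7, e8, Nat.choose_succ_succ' j i,
          Nat.choose_self, Nat.choose_self]
        have ha : a ^ (j + 1 - (i+1)) = a * a ^ (j - (i+1)) := by
          rw [← pow_succ']; congr 1; omega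
        have ha2 : a ^ (j - i) = a * a ^ (j - (i+1)) := by
          rw [← pow_succ']; congr 1; omega
        rw [ha, ha2]
        have hb : b ^ (i+1) = b * b ^ i := by rw [← pow_succ']
        rw [hb]
        ring
      · -- k+1 > i+1 : everything vanishes
        have z1 : Nat.choose (i+1) (k+1) = 0 := Nat.choose_eq_zero_of_lt (by omega)
        have z2 : Nat.choose i k = 0 := Nat.choose_eq_zero_of_lt (by omega)
        have z3 : Nat.choose i (k+1) = 0 := Nat.choose_eq_zero_of_lt (by omega)
        rw [z1, z2, z3]; ring
  · rcases eq_or_lt_of_le (Nat.succ_le_of_lt hkj) with hkj' | hkj'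
    · -- k+1 = j+1
      obtain rfl : j = k := by omega
      have e3 : i + 1 + j - (j+1) = i := by omega
      have e4 : i + j - j = i := by omega
      have e5 : i + (j+1) - (j+1) = i := by omega
      have e6 : i + 1 + (j + 1) - (j+1) = i + 1 := by omega
      have e7 : j + 1 - (j+1) = 0 := by omega
      have e8 : j - j = 0 := by omega
      rw [e3, e4, e5, e6, e7, e8, Nat.choose_succ_succ' i j,
        Nat.choose_self, Nat.choose_self]
      have z1 : Nat.choose i (i+1) = 0 := Nat.choose_eq_zero_of_lt (by omega)
      rw [z1]
      have hb : b ^ (j+1) = b * b ^ j := by rw [← pow_succ']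
      rw [hb]
      rcases le_or_gt (j+1) i with hji | hji
      · have hc : c ^ (i + 1 - (j+1)) = c * c ^ (i - (j+1)) := by
          rw [← pow_succ']; congr 1; omega
        have hc2 : c ^ (i - j) = c * c ^ (i - (j+1)) := by
          rw [← pow_succ']; congr 1; omega
        rw [hc, hc2]; ring
      · rcases eq_or_lt_of_le (Nat.succ_le_of_lt hji) with hji' | hji'
        · obtain rfl : i = j := by omega
          have z2 : Nat.choose i (i+1) = 0 := Nat.choose_eq_zero_of_lt (by omega)
          have e9 : i + 1 - (i+1) = 0 := by omega
          have e10 : i - i = 0 := by omega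
          rw [z2, e9, e10, Nat.choose_self]
          ring
        · have z2 : Nat.choose i (j+1) = 0 := Nat.choose_eq_zero_of_lt (by omega)
          have z3 : Nat.choose i j = 0 := Nat.choose_eq_zero_of_lt (by omega)
          rw [z2, z3]; ring
    · -- k+1 ≥ j+2 : vanishing via the "big binomials"
      have z1 : Nat.choose (i + 1 + j - (k+1)) (i+1) = 0 :=
        Nat.choose_eq_zero_of_lt (by omega)
      have z2 : Nat.choose (i + 1 + (j+1) - (k+1)) (i+1) = 0 :=
        Nat.choose_eq_zero_of_lt (by omega)
      have z3 : Nat.choose i k * Nat.choose (i + j - k) i = 0 := by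
        rcases Nat.eq_zero_or_pos i with rfl | hi
        · rw [Nat.choose_eq_zero_of_lt (show 0 < k by omega), zero_mul]
        · rw [Nat.choose_eq_zero_of_lt (show i + j - k < i by omega), mul_zero]
      have z4 : Nat.choose i (k+1) * Nat.choose (i + (j+1) - (k+1)) i = 0 := by
        rcases Nat.eq_zero_or_pos i with rfl | hi
        · rw [Nat.choose_eq_zero_of_lt (show 0 < k + 1 by omega), zero_mul]
        · rw [Nat.choose_eq_zero_of_lt (show i + (j+1) - (k+1) < i by omega), mul_zero]
      rw [z1, z2]
      calc a * (Nat.choose (i+1) (k+1) * 0 * a ^ (j - (k+1)) * b ^ (k+1) * c ^ (i + 1 - (k+1)))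
            + b * (Nat.choose i k * Nat.choose (i + j - k) i * a ^ (j - k) * b ^ k * c ^ (i - k))
            + c * (Nat.choose i (k+1) * Nat.choose (i + (j+1) - (k+1)) i * a ^ (j + 1 - (k+1)) * b ^ (k+1) * c ^ (i - (k+1)))
          = b * (0 * a ^ (j - k) * b ^ k * c ^ (i - k))
            + c * (0 * a ^ (j + 1 - (k+1)) * b ^ (k+1) * c ^ (i - (k+1))) := by
            rw [z3, z4]; ring
        _ = Nat.choose (i+1) (k+1) * 0 * a ^ (j + 1 - (k+1)) * b ^ (k+1) * c ^ (i + 1 - (k+1)) := by ring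

lemma M_closed (a b c : ℕ) : ∀ i j, M a b c i j =
    ∑ k ∈ Finset.range (i+1), Mterm a b c i j k := by
  intro i
  induction i with
  | zero =>
    intro j
    cases j with
    | zero => simp [M, Mterm]
    | succ j => simp [M, Mterm]
  | succ i ih =>
    intro j
    induction j with
    | zero =>
      rw [show M a b c (i+1) 0 = c^(i+1) from by simp [M], Finset.sum_range_succ']
      have hz : ∑ k ∈ Finset.range (i+1), Mterm a b c (i+1) 0 (k+1) = 0 := by
        apply Finset.sum_eq_zero
        intro k _
        unfold Mterm
        rw [Nat.choose_eq_zero_of_lt (show i+1+0-(k+1) < i+1 by omega)]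
        ring
      rw [hz, zero_add]
      simp [Mterm]
    | succ j ihj =>
      rw [show M a b c (i+1) (j+1)
          = a * M a b c (i + 1) j + b * M a b c i j + c * M a b c i (j + 1) from by
            rw [M],
        ihj, ih j, ih (j+1)]
      have hbs : (∑ k ∈ Finset.range (i+2),
              (if k = 0 then 0 else b * Mterm a b c i j (k-1)))
          = b * ∑ k ∈ Finset.range (i+1), Mterm a b c i j k := by
        rw [Finset.sum_range_succ'
            (fun k => if k = 0 then 0 else b * Mterm a b c i j (k-1)) (i+1)]
        simp [Finset.mul_sum]
      have hcs : c * ∑ k ∈ Finset.range (i+1), Mterm a b c i (j+1) k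
          = ∑ k ∈ Finset.range (i+2), c * Mterm a b c i (j+1) k := by
        rw [Finset.sum_range_succ (fun k => c * Mterm a b c i (j+1) k) (i+1)]
        have h0 : Mterm a b c i (j+1) (i+1) = 0 := by
          unfold Mterm
          rw [Nat.choose_eq_zero_of_lt (lt_add_one i)]
          ring
        rw [h0, mul_zero, add_zero, Finset.mul_sum]
      rw [← hbs, hcs, Finset.mul_sum, ← Finset.sum_add_distrib, ← Finset.sum_add_distrib]
      exact Finset.sum_congr rfl (fun k _ => key a b c i j k)

lemma choose_add_self_mod (p : ℕ) (hp : p.Prime) :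
    ∀ i, i < p → Nat.choose (i + p) i ≡ 1 [MOD p] := by
  intro i
  induction i with
  | zero => intro _; simp [Nat.ModEq]
  | succ i ih =>
    intro hi
    have h1 : Nat.choose (i + 1 + p) (i + 1)
        = Nat.choose (i + p) i + Nat.choose (i + p) (i + 1) := by
      rw [show i + 1 + p = (i + p) + 1 from by ring, Nat.choose_succ_succ' (i+p) i]
    have h2 : p ∣ Nat.choose (i + p) (i + 1) := by
      have := Nat.Prime.dvd_choose_add hp (show i + 1 < p from hi)
        (show p - 1 < p from by omega) (show p ≤ (i+1) + (p-1) from by omega)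
      rwa [show (i+1) + (p-1) = i + p from by omega] at this
    rw [h1]
    calc Nat.choose (i + p) i + Nat.choose (i + p) (i + 1)
        ≡ 1 + 0 [MOD p] :=
          Nat.ModEq.add (ih (by omega)) ((Nat.modEq_zero_iff_dvd).mpr h2)
      _ = 1 := by ring

/-- From the proof of Lemma 4.11: for `p` prime and `i < p`,
`M[i, p] ≡ a^p · c^i` modulo `p`, and consequently `M[i, p] ≡ a · c^i` modulo `p`. -/
theorem M_row_p (p a b c : ℕ) (hp : p.Prime) :
    ∀ i : ℕ, i < p →
      M a b c i p ≡ a ^ p * c ^ i [MOD p] ∧ M a b c i p ≡ a * c ^ i [MOD p] := by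
  intro i hi
  have hmain : M a b c i p ≡ a ^ p * c ^ i [MOD p] := by
    rw [M_closed, Finset.sum_range_succ']
    have hz : (∑ k ∈ Finset.range i, Mterm a b c i p (k+1)) ≡ 0 [MOD p] := by
      rw [Nat.modEq_zero_iff_dvd]
      apply Finset.dvd_sum
      intro k hk
      have hk' : k < i := Finset.mem_range.mp hk
      have hch : p ∣ Nat.choose (i + p - (k+1)) i := by
        have := Nat.Prime.dvd_choose_add hp hi
          (show p - (k+1) < p from by omega)
          (show p ≤ i + (p - (k+1)) from by omega)
        rwa [show i + (p - (k+1)) = i + p - (k+1) from by omega] at this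
      unfold Mterm
      exact (((hch.mul_left _).mul_right _).mul_right _).mul_right _
    have h0 : Mterm a b c i p 0 = Nat.choose (i + p) i * (a ^ p * c ^ i) := by
      unfold Mterm
      simp
      ring
    calc (∑ k ∈ Finset.range i, Mterm a b c i p (k+1)) + Mterm a b c i p 0
        ≡ 0 + Nat.choose (i + p) i * (a ^ p * c ^ i) [MOD p] := by
          rw [h0]; exact Nat.ModEq.add hz (Nat.ModEq.refl _)
      _ = Nat.choose (i + p) i * (a ^ p * c ^ i) := by rw [zero_add]
      _ ≡ 1 * (a ^ p * c ^ i) [MOD p] :=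
          Nat.ModEq.mul_right _ (choose_add_self_mod p hp i hi)
      _ = a ^ p * c ^ i := by rw [one_mul]
  refine ⟨hmain, hmain.trans (Nat.ModEq.mul_right _ ?_)⟩
  haveI := Fact.mk hp
  exact (ZMod.natCast_eq_natCast_iff _ _ _).mp (by push_cast; exact ZMod.pow_card (a : ZMod p))
end

section
/- Let p be a prime not dividing any of a, b, c, and let k ≥ 0. Then M[p^k − 1, p^k − 1] ≡ 1 (mod p). -/
open Finset

lemma choose_succ_mul_pow_sub_succ_mul (n t x : ℕ) :
    n.choose (t + 1) * x ^ (n - (t + 1)) * x = n.choose (t + 1) * x ^ (n - t) := by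
  rcases lt_or_ge n (t + 1) with h | h
  · simp [Nat.choose_eq_zero_of_lt h]
  · rw [mul_assoc, ← pow_succ, show n - (t + 1) + 1 = n - t by omega]

section ClosedForm

variable (a b c : ℕ)

def MTerm (i j t : ℕ) : ℕ :=
  i.choose t * j.choose t * a ^ (j - t) * c ^ (i - t) * (b + a * c) ^ t

lemma MTerm_succ_succ_succ (i j t : ℕ) :
    MTerm a b c (i + 1) (j + 1) (t + 1) + a * c * MTerm a b c i j (t + 1) =
      a * MTerm a b c (i + 1) j (t + 1) + c * MTerm a b c i (j + 1) (t + 1) +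
        (b + a * c) * MTerm a b c i j t := by
  have ha := congrArg (Nat.cast : ℕ → ℤ) (choose_succ_mul_pow_sub_succ_mul j t a)
  have hc := congrArg (Nat.cast : ℕ → ℤ) (choose_succ_mul_pow_sub_succ_mul i t c)
  apply Nat.cast_injective (R := ℤ)
  push_cast [MTerm, Nat.choose_succ_succ, Nat.succ_sub_succ] at ha hc ⊢
  linear_combination (b + a * c) ^ (t + 1) * ((c * i.choose (t + 1) * c ^ (i - (t + 1))
    - (i.choose t + i.choose (t + 1)) * c ^ (i - t)) * ha
    + (j.choose (t + 1) * a ^ (j - t) - (j.choose t + j.choose (t + 1)) * a ^ (j - t)) * hc)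

lemma sum_MTerm_succ_succ (i j N : ℕ) :
    ∑ t ∈ range (N + 1), MTerm a b c (i + 1) (j + 1) t +
        a * c * ∑ t ∈ range (N + 1), MTerm a b c i j t =
      a * ∑ t ∈ range (N + 1), MTerm a b c (i + 1) j t +
        c * ∑ t ∈ range (N + 1), MTerm a b c i (j + 1) t +
        (b + a * c) * ∑ t ∈ range N, MTerm a b c i j t := by
  have hsucc := sum_congr rfl fun t (_ : t ∈ range N) => MTerm_succ_succ_succ a b c i j t
  simp only [sum_add_distrib, ← mul_sum] at hsucc
  have hzero : MTerm a b c (i + 1) (j + 1) 0 + a * c * MTerm a b c i j 0 =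
      a * MTerm a b c (i + 1) j 0 + c * MTerm a b c i (j + 1) 0 := by
    simp only [MTerm, Nat.choose_zero_right, Nat.sub_zero, pow_zero]
    ring
  simp only [sum_range_succ' _ N]
  linear_combination hsucc + hzero

lemma sum_range_MTerm_of_lt (j : ℕ) {i N : ℕ} (h : i < N) :
    ∑ t ∈ range N, MTerm a b c i j t = ∑ t ∈ range (i + 1), MTerm a b c i j t := by
  refine (sum_subset (range_subset_range.2 h) fun t _ ht => ?_).symm
  simp [MTerm, Nat.choose_eq_zero_of_lt (not_lt.1 (mem_range.not.1 ht))]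

theorem M_eq_sum_MTerm (i j : ℕ) : M a b c i j = ∑ t ∈ range (i + 1), MTerm a b c i j t := by
  induction i, j using M.induct with
  | case1 => simp [M, MTerm]
  | case2 j => simp [M, MTerm]
  | case3 i => simp [M, MTerm, sum_range_succ']
  | case4 i j ih₁ ih₂ ih₃ =>
    have h := sum_MTerm_succ_succ a b c i j (i + 1)
    rw [sum_range_MTerm_of_lt a b c j (show i < i + 1 + 1 by omega),
      sum_range_MTerm_of_lt a b c (j + 1) (show i < i + 1 + 1 by omega)] at h
    rw [M, ih₁, ih₂, ih₃]
    linarith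

end ClosedForm

lemma neg_one_pow_mul_choose_prime_pow_sub_one {p : ℕ} [hp : Fact p.Prime] {k t : ℕ}
    (ht : t < p ^ k) : ((-1) ^ t * (p ^ k - 1).choose t : ZMod p) = 1 := by
  have h := congrArg (Int.cast : ℤ → ZMod p)
    (Int.alternating_sum_range_choose_eq_choose (n := p ^ k - 1) (m := t))
  rw [Nat.sub_add_cancel (Nat.one_le_pow _ _ hp.out.pos)] at h
  push_cast at h
  rw [← h, sum_eq_single 0]
  · simp
  · intro j hj hj0
    rw [(ZMod.natCast_eq_zero_iff _ _).2 (hp.out.dvd_choose_pow hj0 (by grind)), mul_zero]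
  · simp

lemma natCast_MTerm_prime_pow_sub_one {p : ℕ} [Fact p.Prime] (a b c : ℕ) {k t : ℕ}
    (ht : t < p ^ k) : (MTerm a b c (p ^ k - 1) (p ^ k - 1) t : ZMod p) =
      (b + a * c) ^ t * (a * c) ^ (p ^ k - 1 - t) := by
  have h := neg_one_pow_mul_choose_prime_pow_sub_one (p := p) ht
  have hsq : ((-1 : ZMod p) ^ t) ^ 2 = 1 := by rw [← pow_mul, pow_mul', neg_one_sq, one_pow]
  push_cast [MTerm]
  linear_combination (b + a * c) ^ t * (a * c) ^ (p ^ k - 1 - t) *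
    (((-1) ^ t * (p ^ k - 1).choose t + 1) * h - ((p ^ k - 1).choose t : ZMod p) ^ 2 * hsq)

theorem M_diag_corner_general (p a b c : ℕ) (hp : p.Prime) (hb : ¬ p ∣ b) (k : ℕ) :
    M a b c (p ^ k - 1) (p ^ k - 1) ≡ 1 [MOD p] := by
  have := Fact.mk hp
  have hq : p ^ k - 1 + 1 = p ^ k := Nat.sub_add_cancel (Nat.one_le_pow _ _ hp.pos)
  have hb : (b : ZMod p) ≠ 0 := by rwa [Ne, ZMod.natCast_eq_zero_iff]
  rw [← ZMod.natCast_eq_natCast_iff, M_eq_sum_MTerm, hq, Nat.cast_sum,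
    sum_congr rfl fun t ht => natCast_MTerm_prime_pow_sub_one a b c (mem_range.1 ht),
    Nat.cast_one]
  refine mul_right_cancel₀ hb ?_
  calc _ = (∑ t ∈ range (p ^ k), ((b : ZMod p) + a * c) ^ t * (a * c) ^ (p ^ k - 1 - t)) *
          ((b + a * c) - a * c) := by rw [add_sub_cancel_right]
    _ = b ^ p ^ k := by rw [geom_sum₂_mul, ← sub_pow_char_pow, add_sub_cancel_right]
    _ = 1 * b := by rw [ZMod.pow_card_pow, one_mul]

/-- Part (c) of the induction in the proof of Theorem 4.4: for `p` prime not dividing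
`a`, `b`, or `c`, and any `k ≥ 0`, `M[p^k - 1, p^k - 1] ≡ 1 (mod p)`. -/
theorem M_diag_corner (p a b c : ℕ) (hp : p.Prime)
    (ha : ¬ p ∣ a) (hb : ¬ p ∣ b) (hc : ¬ p ∣ c) (k : ℕ) :
    M a b c (p ^ k - 1) (p ^ k - 1) ≡ 1 [MOD p] :=
  M_diag_corner_general p a b c hp hb k
end

section
/- Let D be the Delannoy matrix, i.e., the matrix M with a = b = c = 1. Then the set {(i,j) ∈ ℕ × ℕ : D[i,j] is not congruent to 0 modulo 3} is the discrete Sierpinski carpet: for all i, j, D[i,j] is not congruent to 0 modulo 3 if and only if there is no position k at which the k-th base-3 digit of i and the k-th base-3 digit of j are both equal to 1. -/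
/-!
Modulo `p`, the function `(i, j) ↦ D(i % p, j % p) · D(i / p, j / p)` has the boundary values and
the recurrence of `D` as soon as the last row of the `p × p` block of `D` satisfies
`D(p-1, s) + D(p-1, s+1) ≡ 0` and `D(p-1, p-1) ≡ 1` (true for every prime, as
`D(p-1, s) ≡ (-1)^s`; for `p = 3` a direct check), so it equals `D`. Iterating this Lucas-type
factorisation over base-3 digits, `D(i, j) ≡ 0 (mod 3)` iff some digit pair `(r, s)` has
`D(r, s) ≡ 0`, and among `r, s < 3` only `D(1, 1) = 3` vanishes.
-/

local notation "D" => M 1 1 1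

lemma delannoy_zero_left (j : ℕ) : D 0 j = 1 := by
  cases j <;> simp [M]

lemma delannoy_zero_right (i : ℕ) : D i 0 = 1 := by
  cases i <;> simp [M]

lemma delannoy_succ_succ (i j : ℕ) : D (i + 1) (j + 1) = D (i + 1) j + D i j + D i (j + 1) := by
  simp [M]

lemma eq_delannoy_of_rec {R : Type*} [Semiring R] (f : ℕ → ℕ → R) (h_left : ∀ j, f 0 j = 1)
    (h_right : ∀ i, f i 0 = 1)
    (h_rec : ∀ i j, f (i + 1) (j + 1) = f (i + 1) j + f i j + f i (j + 1)) (i j : ℕ) :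
    f i j = D i j := by
  induction i generalizing j with
  | zero => simp [h_left, delannoy_zero_left]
  | succ i ih_i =>
    induction j with
    | zero => simp [h_right, delannoy_zero_right]
    | succ j ih_j => rw [h_rec, delannoy_succ_succ, ih_j, ih_i, ih_i]; push_cast; rfl

lemma delannoy_comm (i j : ℕ) : D i j = D j i := by
  refine (eq_delannoy_of_rec (fun i j => D j i) delannoy_zero_right delannoy_zero_left
    (fun i j => ?_) i j).symm
  simp only [delannoy_succ_succ]; ring

lemma succ_mod_div_cases (p i : ℕ) [NeZero p] :
    (i % p + 1 < p ∧ (i + 1) % p = i % p + 1 ∧ (i + 1) / p = i / p) ∨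
      (i % p = p - 1 ∧ (i + 1) % p = 0 ∧ (i + 1) / p = i / p + 1) := by
  have hp : 0 < p := Nat.pos_of_neZero p
  have hdiv := Nat.div_add_mod i p
  have hlt := Nat.mod_lt i hp
  rcases Nat.lt_or_ge (i % p + 1) p with h | h
  · have := (Nat.div_mod_unique (a := i + 1) (d := i / p) hp).2 ⟨by omega, h⟩
    exact .inl ⟨h, this.2, this.1⟩
  · have := (Nat.div_mod_unique (a := i + 1) (c := 0) (d := i / p + 1) hp).2
      ⟨by rw [Nat.mul_succ]; omega, hp⟩
    exact .inr ⟨by omega, this.2, this.1⟩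

theorem delannoy_mul_mod (p : ℕ) [NeZero p]
    (h_col : ∀ s, s + 1 < p → (D (p - 1) s + D (p - 1) (s + 1) : ZMod p) = 0)
    (h_corner : (D (p - 1) (p - 1) : ZMod p) = 1) (i j : ℕ) :
    (D i j : ZMod p) = D (i % p) (j % p) * D (i / p) (j / p) := by
  have h_row : ∀ r, r + 1 < p → (D r (p - 1) + D (r + 1) (p - 1) : ZMod p) = 0 := fun r hr => by
    simpa only [delannoy_comm _ (p - 1)] using h_col r hr
  refine (eq_delannoy_of_rec (fun i j => (D (i % p) (j % p) * D (i / p) (j / p) : ZMod p))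
    (by simp [delannoy_zero_left]) (by simp [delannoy_zero_right]) (fun i j => ?_) i j).symm
  obtain ⟨hi, hi₁, hi₂⟩ | ⟨hi₀, hi₁, hi₂⟩ := succ_mod_div_cases p i <;>
    obtain ⟨hj, hj₁, hj₂⟩ | ⟨hj₀, hj₁, hj₂⟩ := succ_mod_div_cases p j
  · rw [hi₁, hi₂, hj₁, hj₂, delannoy_succ_succ]
    push_cast; ring
  · rw [hi₁, hi₂, hj₀, hj₁, hj₂]
    simp only [delannoy_zero_right, Nat.cast_one]
    linear_combination -(D (i / p) (j / p) : ZMod p) * h_row _ hi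
  · rw [hi₀, hi₁, hi₂, hj₁, hj₂]
    simp only [delannoy_zero_left, Nat.cast_one]
    linear_combination -(D (i / p) (j / p) : ZMod p) * h_col _ hj
  · rw [hi₀, hi₁, hi₂, hj₀, hj₁, hj₂, delannoy_succ_succ]
    simp only [delannoy_zero_left, delannoy_zero_right, Nat.cast_one, Nat.cast_add]
    linear_combination -(D (i / p) (j / p) : ZMod p) * h_corner

lemma exists_div_pow_mod_iff (b i j : ℕ) (P : ℕ → ℕ → Prop) :
    (∃ k, P (i / b ^ k % b) (j / b ^ k % b)) ↔
      P (i % b) (j % b) ∨ ∃ k, P (i / b / b ^ k % b) (j / b / b ^ k % b) := by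
  simp only [Nat.div_div_eq_div_mul, ← pow_succ']
  constructor
  · rintro ⟨_ | k, hk⟩
    · exact .inl (by simpa using hk)
    · exact .inr ⟨k, hk⟩
  · rintro (h | ⟨k, hk⟩)
    · exact ⟨0, by simpa using h⟩
    · exact ⟨k + 1, hk⟩

lemma delannoy_mod_three_eq_zero_iff_of_lt {r s : ℕ} (hr : r < 3) (hs : s < 3) :
    (D r s : ZMod 3) = 0 ↔ r = 1 ∧ s = 1 := by
  interval_cases r <;> interval_cases s <;>
    simp [delannoy_succ_succ, delannoy_zero_left, delannoy_zero_right] <;> decide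

theorem delannoy_mod_three_eq_zero_iff (i j : ℕ) :
    (D i j : ZMod 3) = 0 ↔ ∃ k, i / 3 ^ k % 3 = 1 ∧ j / 3 ^ k % 3 = 1 := by
  have h_col : ∀ s, s + 1 < 3 → (D 2 s + D 2 (s + 1) : ZMod 3) = 0 := fun s hs => by
    obtain rfl | rfl : s = 0 ∨ s = 1 := by omega
    all_goals simp [delannoy_succ_succ, delannoy_zero_left, delannoy_zero_right]; decide
  have h_corner : (D 2 2 : ZMod 3) = 1 := by
    simp [delannoy_succ_succ, delannoy_zero_left, delannoy_zero_right]; decide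
  induction i using Nat.strong_induction_on generalizing j with
  | _ i ih =>
  rcases Nat.eq_zero_or_pos i with rfl | hi
  · simp [delannoy_zero_left]
  · have h_quot : (D (i / 3) (j / 3) : ZMod 3) = 0 ↔ _ := ih (i / 3) (by omega) (j / 3)
    rw [delannoy_mul_mod 3 h_col h_corner, mul_eq_zero,
      delannoy_mod_three_eq_zero_iff_of_lt (Nat.mod_lt _ three_pos) (Nat.mod_lt _ three_pos),
      h_quot]
    exact (exists_div_pow_mod_iff 3 i j (fun x y => x = 1 ∧ y = 1)).symm

/-- Corollary: the set of points where the Delannoy matrix (`M` with `a = b = c = 1`)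
is nonzero modulo 3 is exactly the discrete Sierpinski carpet: `D[i,j] ≢ 0 (mod 3)` iff
there is no position `k` at which the `k`-th base-3 digits of `i` and `j` both equal 1. -/
theorem delannoy_sierpinski_carpet :
    ∀ i j : ℕ, (¬ M 1 1 1 i j ≡ 0 [MOD 3]) ↔
      ¬ ∃ k : ℕ, i / 3 ^ k % 3 = 1 ∧ j / 3 ^ k % 3 = 1 := by
  intro i j
  rw [← delannoy_mod_three_eq_zero_iff, ← Nat.cast_zero (R := ZMod 3), ZMod.natCast_eq_natCast_iff]
end
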